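/- Let T > 0, let H be a real Hilbert space, X = H × H, and let J be the symplectic operator J(p,q) = (−q, p) on X. Then for every absolutely continuous path u : [0,T] → X with u̇ ∈ L²(0,T;X), one has | ∫₀ᵀ ⟨J u̇(t), u(t)⟩ dt + ⟨J (u(0)+u(T))/2, u(T) − u(0)⟩ | ≤ (T/2) ∫₀ᵀ ‖u̇(t)‖² dt. -/

import Mathlib

/-! With `m = (u(0) + u(T))/2`, skew-symmetry of `J` and `u(T) - u(0) = ∫₀ᵀ u̇` turn the quantity
inside the absolute value into `∫₀ᵀ ⟨J u̇, u - m⟩`. Since `u(t) - m = (∫₀ᵗ u̇ - ∫ₜᵀ u̇)/2`, we have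
`‖u(t) - m‖ ≤ ½ ∫₀ᵀ ‖u̇‖`, so that integral is at most `½ (∫₀ᵀ ‖u̇‖)² ≤ (T/2) ∫₀ᵀ ‖u̇‖²` by
Cauchy–Schwarz. -/

open MeasureTheory Set Filter Topology RealInnerProductSpace

noncomputable section

/-- `u` is an absolutely continuous path on `[0,T]` with derivative `u'` in `L²(0,T;F)`. -/
def InA2 {F : Type*} [NormedAddCommGroup F] [NormedSpace ℝ F]
    (T : ℝ) (u u' : ℝ → F) : Prop :=
  MemLp u' 2 (volume.restrict (Set.Ioc (0:ℝ) T)) ∧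
  ∀ t ∈ Set.Icc (0:ℝ) T, u t = u 0 + ∫ s in (0:ℝ)..t, u' s

variable {H : Type*} [NormedAddCommGroup H] [InnerProductSpace ℝ H]

/-- The symplectic operator `J(p,q) = (-q,p)` on `X = H × H`. -/
def Jmap (a : H × H) : H × H := (-a.2, a.1)

/-- The inner product on `X = H × H`. -/
def pinX (a b : H × H) : ℝ := ⟪a.1, b.1⟫ + ⟪a.2, b.2⟫

/-- The squared norm on `X = H × H`. -/
def normX2 (a : H × H) : ℝ := ‖a.1‖^2 + ‖a.2‖^2

theorem MeasureTheory.MemLp.sq_integral_norm_le {α F : Type*} [MeasurableSpace α]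
    {μ : Measure α} [IsFiniteMeasure μ] [NormedAddCommGroup F] {g : α → F}
    (hg : MemLp g 2 μ) :
    (∫ x, ‖g x‖ ∂μ) ^ 2 ≤ μ.real univ * ∫ x, ‖g x‖ ^ 2 ∂μ := by
  have hg' : MemLp (fun x => ‖g x‖) (ENNReal.ofReal 2) μ := by
    simpa using hg.norm
  have holder := integral_mul_le_Lp_mul_Lq_of_nonneg Real.HolderConjugate.two_two
    (Eventually.of_forall fun x => norm_nonneg (g x))
    (Eventually.of_forall fun _ => zero_le_one) hg' (memLp_const (1 : ℝ))
  simp only [mul_one, Real.rpow_two, one_pow, integral_const, smul_eq_mul] at holder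
  have hA : 0 ≤ ∫ x, ‖g x‖ ^ 2 ∂μ := integral_nonneg fun x => sq_nonneg _
  calc (∫ x, ‖g x‖ ∂μ) ^ 2
      ≤ ((∫ x, ‖g x‖ ^ 2 ∂μ) ^ (1 / 2 : ℝ) * μ.real univ ^ (1 / 2 : ℝ)) ^ 2 :=
        pow_le_pow_left₀ (integral_nonneg fun x => norm_nonneg _) holder 2
    _ = μ.real univ * ∫ x, ‖g x‖ ^ 2 ∂μ := by
        rw [← Real.sqrt_eq_rpow, ← Real.sqrt_eq_rpow, mul_pow, Real.sq_sqrt hA,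
          Real.sq_sqrt measureReal_nonneg, mul_comm]

namespace InA2

variable {F : Type*} [NormedAddCommGroup F] [NormedSpace ℝ F] {T : ℝ} {f f' : ℝ → F}

theorem intervalIntegrable (hf : InA2 T f f') {a b : ℝ} (ha : 0 ≤ a) (hab : a ≤ b)
    (hb : b ≤ T) : IntervalIntegrable f' volume a b := by
  rw [intervalIntegrable_iff_integrableOn_Ioc_of_le hab]
  exact IntegrableOn.mono_set (hf.1.integrable one_le_two) (Ioc_subset_Ioc ha hb)

theorem continuousOn (hf : InA2 T f f') (hT : 0 ≤ T) : ContinuousOn f (Icc 0 T) := by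
  have hprim : ContinuousOn (fun t => f 0 + ∫ s in (0:ℝ)..t, f' s) (Icc 0 T) := by
    rw [← uIcc_of_le hT]
    exact continuousOn_const.add (intervalIntegral.continuousOn_primitive_interval'
      (hf.intervalIntegrable le_rfl hT le_rfl) left_mem_uIcc)
  exact hprim.congr hf.2

theorem sub_eq_integral (hf : InA2 T f f') (hT : 0 ≤ T) :
    f T - f 0 = ∫ t in Ioc 0 T, f' t := by
  rw [hf.2 T ⟨hT, le_rfl⟩, ← intervalIntegral.integral_of_le hT, add_sub_cancel_left]

theorem norm_sub_midpoint_le (hf : InA2 T f f') {t : ℝ} (ht : t ∈ Icc 0 T) :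
    ‖f t - (2:ℝ)⁻¹ • (f 0 + f T)‖ ≤ (∫ s in Ioc 0 T, ‖f' s‖) / 2 := by
  have h0t := hf.intervalIntegrable le_rfl ht.1 ht.2
  have htT := hf.intervalIntegrable ht.1 ht.2 le_rfl
  have hsplit : f t - (2:ℝ)⁻¹ • (f 0 + f T) =
      (2:ℝ)⁻¹ • ((∫ s in (0:ℝ)..t, f' s) - ∫ s in t..T, f' s) := by
    rw [hf.2 t ht, hf.2 T ⟨ht.1.trans ht.2, le_rfl⟩,
      ← intervalIntegral.integral_add_adjacent_intervals h0t htT]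
    module
  have hsplit_norm :
      (∫ s in (0:ℝ)..t, ‖f' s‖) + ∫ s in t..T, ‖f' s‖ = ∫ s in Ioc 0 T, ‖f' s‖ := by
    rw [intervalIntegral.integral_add_adjacent_intervals h0t.norm htT.norm,
      intervalIntegral.integral_of_le (ht.1.trans ht.2)]
  calc ‖f t - (2:ℝ)⁻¹ • (f 0 + f T)‖
      = 2⁻¹ * ‖(∫ s in (0:ℝ)..t, f' s) - ∫ s in t..T, f' s‖ := by
        rw [hsplit, norm_smul, Real.norm_of_nonneg (by norm_num)]
    _ ≤ 2⁻¹ * (‖∫ s in (0:ℝ)..t, f' s‖ + ‖∫ s in t..T, f' s‖) := by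
        gcongr; exact norm_sub_le _ _
    _ ≤ 2⁻¹ * ((∫ s in (0:ℝ)..t, ‖f' s‖) + ∫ s in t..T, ‖f' s‖) := by
        gcongr
        exacts [intervalIntegral.norm_integral_le_integral_norm ht.1,
          intervalIntegral.norm_integral_le_integral_norm ht.2]
    _ = (∫ s in Ioc 0 T, ‖f' s‖) / 2 := by rw [hsplit_norm]; ring

theorem map_continuousLinearEquiv {G : Type*} [NormedAddCommGroup G] [NormedSpace ℝ G]
    (hf : InA2 T f f') (L : F ≃L[ℝ] G) : InA2 T (fun t => L (f t)) (fun t => L (f' t)) := by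
  refine ⟨L.toContinuousLinearMap.comp_memLp' hf.1, fun t ht => ?_⟩
  dsimp only
  rw [hf.2 t ht, map_add, intervalIntegral.integral_of_le ht.1,
    intervalIntegral.integral_of_le ht.1, L.integral_comp_comm]

end InA2

section SkewOperator

variable {E : Type*} [NormedAddCommGroup E] [InnerProductSpace ℝ E] [CompleteSpace E]
  {T : ℝ} {f f' : ℝ → E} (𝒥 : E →L[ℝ] E)

theorem InA2.integral_inner_add_boundary_eq (hf : InA2 T f f') (hT : 0 ≤ T)
    (h𝒥 : ∀ a b, ⟪𝒥 a, b⟫ = -⟪𝒥 b, a⟫) (c : E)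
    (hint : Integrable (fun t => ⟪𝒥 (f' t), f t - c⟫) (volume.restrict (Ioc 0 T))) :
    (∫ t in Ioc 0 T, ⟪𝒥 (f' t), f t⟫) + ⟪𝒥 c, f T - f 0⟫ =
      ∫ t in Ioc 0 T, ⟪𝒥 (f' t), f t - c⟫ := by
  have hf'_int : Integrable f' (volume.restrict (Ioc 0 T)) := hf.1.integrable one_le_two
  have hconst_int : Integrable (fun t => ⟪𝒥 (f' t), c⟫) (volume.restrict (Ioc 0 T)) :=
    ((innerSL ℝ c).comp 𝒥).integrable_comp hf'_int |>.congr
      (Eventually.of_forall fun t => real_inner_comm _ _)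
  have hsplit : ∫ t in Ioc 0 T, ⟪𝒥 (f' t), f t⟫ =
      (∫ t in Ioc 0 T, ⟪𝒥 (f' t), f t - c⟫) + ∫ t in Ioc 0 T, ⟪𝒥 (f' t), c⟫ := by
    rw [← integral_add hint hconst_int]
    simp_rw [← inner_add_right, sub_add_cancel]
  have hboundary : ∫ t in Ioc 0 T, ⟪𝒥 (f' t), c⟫ = -⟪𝒥 c, f T - f 0⟫ := by
    simp_rw [real_inner_comm c]
    rw [integral_inner (𝒥.integrable_comp hf'_int), 𝒥.integral_comp_comm hf'_int,
      ← hf.sub_eq_integral hT, real_inner_comm, h𝒥]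
  rw [hsplit, hboundary, neg_add_cancel_right]

theorem InA2.abs_integral_inner_add_boundary_le (hf : InA2 T f f') (hT : 0 ≤ T)
    (h𝒥 : ∀ a b, ⟪𝒥 a, b⟫ = -⟪𝒥 b, a⟫) :
    |(∫ t in Ioc 0 T, ⟪𝒥 (f' t), f t⟫) + ⟪𝒥 ((2:ℝ)⁻¹ • (f 0 + f T)), f T - f 0⟫| ≤
      ‖𝒥‖ * (T / 2 * ∫ t in Ioc 0 T, ‖f' t‖ ^ 2) := by
  set m := (2:ℝ)⁻¹ • (f 0 + f T)
  set C := ∫ t in Ioc 0 T, ‖f' t‖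
  have hf'_int : Integrable f' (volume.restrict (Ioc 0 T)) := hf.1.integrable one_le_two
  have hbound : ∀ᵐ t ∂volume.restrict (Ioc 0 T),
      ‖⟪𝒥 (f' t), f t - m⟫‖ ≤ ‖𝒥‖ * (C / 2) * ‖f' t‖ := by
    filter_upwards [ae_restrict_mem measurableSet_Ioc] with t ht
    calc ‖⟪𝒥 (f' t), f t - m⟫‖ ≤ ‖𝒥 (f' t)‖ * ‖f t - m‖ := norm_inner_le_norm _ _
      _ ≤ ‖𝒥‖ * ‖f' t‖ * (C / 2) := by
          gcongr
          exacts [𝒥.le_opNorm _, hf.norm_sub_midpoint_le (Ioc_subset_Icc_self ht)]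
      _ = ‖𝒥‖ * (C / 2) * ‖f' t‖ := by ring
  have hf_meas : AEStronglyMeasurable f (volume.restrict (Ioc 0 T)) :=
    ((hf.continuousOn hT).mono Ioc_subset_Icc_self).aestronglyMeasurable measurableSet_Ioc
  have hint : Integrable (fun t => ⟪𝒥 (f' t), f t - m⟫) (volume.restrict (Ioc 0 T)) :=
    (hf'_int.norm.const_mul _).mono'
      ((𝒥.continuous.comp_aestronglyMeasurable hf'_int.1).inner
        (hf_meas.sub aestronglyMeasurable_const)) hbound
  have hcauchy_schwarz : C ^ 2 ≤ T * ∫ t in Ioc 0 T, ‖f' t‖ ^ 2 := by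
    simpa [hT] using hf.1.sq_integral_norm_le
  calc |(∫ t in Ioc 0 T, ⟪𝒥 (f' t), f t⟫) + ⟪𝒥 m, f T - f 0⟫|
      = ‖∫ t in Ioc 0 T, ⟪𝒥 (f' t), f t - m⟫‖ := by
        rw [hf.integral_inner_add_boundary_eq 𝒥 hT h𝒥 m hint, Real.norm_eq_abs]
    _ ≤ ∫ t in Ioc 0 T, ‖𝒥‖ * (C / 2) * ‖f' t‖ :=
        norm_integral_le_of_norm_le (hf'_int.norm.const_mul _) hbound
    _ = ‖𝒥‖ * (C ^ 2 / 2) := by rw [integral_const_mul]; ring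
    _ ≤ ‖𝒥‖ * (T / 2 * ∫ t in Ioc 0 T, ‖f' t‖ ^ 2) := by gcongr; linarith

end SkewOperator

/-- `J` on `WithLp 2 (H × H)`, the Hilbert space whose inner product and squared norm are
`pinX` and `normX2`. -/
def symplecticL2 : WithLp 2 (H × H) →L[ℝ] WithLp 2 (H × H) :=
  (WithLp.prodContinuousLinearEquiv 2 ℝ H H).symm ∘L
    ((-ContinuousLinearMap.snd ℝ H H).prod (ContinuousLinearMap.fst ℝ H H)) ∘L
    (WithLp.prodContinuousLinearEquiv 2 ℝ H H).toContinuousLinearMap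

theorem symplecticL2_toLp (a : H × H) :
    symplecticL2 (WithLp.toLp 2 a) = WithLp.toLp 2 (Jmap a) := rfl

theorem inner_toLp_toLp (a b : H × H) : ⟪WithLp.toLp 2 a, WithLp.toLp 2 b⟫ = pinX a b := rfl

theorem norm_toLp_sq {K : Type*} [NormedAddCommGroup K] (a : K × K) :
    ‖WithLp.toLp 2 a‖ ^ 2 = normX2 a :=
  WithLp.prod_norm_sq_eq_of_L2 _

theorem inner_symplecticL2_left (x y : WithLp 2 (H × H)) :
    ⟪symplecticL2 x, y⟫ = -⟪symplecticL2 y, x⟫ := by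
  rw [← WithLp.toLp_ofLp (p := 2) x, ← WithLp.toLp_ofLp (p := 2) y, symplecticL2_toLp,
    symplecticL2_toLp, inner_toLp_toLp, inner_toLp_toLp]
  simp only [pinX, Jmap, inner_neg_left, inner_neg_right, real_inner_comm x.ofLp.1,
    real_inner_comm x.ofLp.2]
  ring

theorem norm_symplecticL2_le : ‖(symplecticL2 : WithLp 2 (H × H) →L[ℝ] _)‖ ≤ 1 := by
  refine ContinuousLinearMap.opNorm_le_bound _ zero_le_one fun x => le_of_eq ?_
  rw [one_mul, ← sq_eq_sq₀ (norm_nonneg _) (norm_nonneg _), ← WithLp.toLp_ofLp (p := 2) x,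
    symplecticL2_toLp, norm_toLp_sq, norm_toLp_sq]
  simp only [normX2, Jmap, norm_neg]
  ring

/-- For every `u ∈ A²_X`,
`|∫₀ᵀ ⟨Ju̇,u⟩ dt + ⟨J(u(0)+u(T))/2, u(T)-u(0)⟩| ≤ (T/2) ∫₀ᵀ ‖u̇‖²`. -/
theorem symplectic_boundary_estimate_general
    [CompleteSpace H]
    (T : ℝ) (hT : 0 < T) (u u' : ℝ → H × H) (hu : InA2 T u u') :
    |(∫ t in Set.Ioc (0:ℝ) T, pinX (Jmap (u' t)) (u t)) +
        pinX (Jmap ((2:ℝ)⁻¹ • (u 0 + u T))) (u T - u 0)| ≤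
      T / 2 * ∫ t in Set.Ioc (0:ℝ) T, normX2 (u' t) := by
  have hL2 := (hu.map_continuousLinearEquiv (WithLp.prodContinuousLinearEquiv 2 ℝ H H).symm
    ).abs_integral_inner_add_boundary_le symplecticL2 hT.le inner_symplecticL2_left
  simp only [WithLp.prodContinuousLinearEquiv_symm_apply, ← WithLp.toLp_add, ← WithLp.toLp_sub,
    ← WithLp.toLp_smul, symplecticL2_toLp, inner_toLp_toLp, norm_toLp_sq] at hL2
  have hrhs : 0 ≤ T / 2 * ∫ t in Ioc 0 T, normX2 (u' t) :=
    mul_nonneg (by positivity) (integral_nonneg fun t => add_nonneg (sq_nonneg _) (sq_nonneg _))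
  exact hL2.trans (mul_le_of_le_one_left hrhs norm_symplecticL2_le)
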